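/- Fix u, k, ω, σ > 0 and β > 0, and for λ > 0 define M(β; λ) := ½u²k [ sin(ωβ) exp(−½k²σ²(β + λ^{−1}(1 − e^{−λβ}))) − λ ∫₀^∞ exp(−λα − ½k²σ²(α + β + λ^{−1})) sin(ω(α+β)) sinh((k²σ²/(2λ)) e^{−λ(α+β)}) dα ]. Then M(β; λ) → ½u²k sin(ωβ) exp(−½k²σ²β) as λ → ∞. -/

import Mathlib

/-!
The first term of the kernel tends to the point-particle kernel because the memory correction
`λ⁻¹ (1 - e^{-λβ})` vanishes. In the second term the factor `λ` is exactly compensated by the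
`e^{-λα}` decay of the integrand, whose remaining factors are bounded by `sinh (k²σ²/(2λ))`;
hence the whole term is at most `sinh (k²σ²/(2λ)) → 0`.
-/

open MeasureTheory Real Set

/-- The paper's leading-order Stokes'-drift kernel `M(β)` for the elastic dumbbell,
with wave amplitude `u`, wavenumber `k`, frequency `ω`, noise strength `σ`,
and spring constant `l` (the paper's `λ`). -/
noncomputable def stokesKernel (u k ω σ l β : ℝ) : ℝ :=
  (1 / 2) * u ^ 2 * k *
    (Real.sin (ω * β) *
        Real.exp (-(k ^ 2 * σ ^ 2 / 2) * (β + l⁻¹ * (1 - Real.exp (-(l * β))))) -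
      l * ∫ α in Ioi (0 : ℝ),
        Real.exp (-(l * α) - k ^ 2 * σ ^ 2 / 2 * (α + β + l⁻¹)) * Real.sin (ω * (α + β)) *
          Real.sinh (k ^ 2 * σ ^ 2 / (2 * l) * Real.exp (-(l * (α + β)))))

open Filter Topology

lemma abs_mul_integral_Ioi_le_of_abs_le_exp {f : ℝ → ℝ} {l C : ℝ} (hl : 0 < l)
    (hf : ∀ α ∈ Ioi (0 : ℝ), |f α| ≤ C * exp (-l * α)) :
    |l * ∫ α in Ioi (0 : ℝ), f α| ≤ C := by
  have h_int : ∫ α in Ioi (0 : ℝ), C * exp (-l * α) = C * l⁻¹ := by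
    rw [integral_const_mul, integral_exp_mul_Ioi (neg_lt_zero.mpr hl), mul_zero, exp_zero]
    field_simp
  have h_le : |∫ α in Ioi (0 : ℝ), f α| ≤ C * l⁻¹ :=
    h_int ▸ norm_integral_le_of_norm_le (f := f)
      ((integrableOn_exp_mul_Ioi (neg_lt_zero.mpr hl) 0).const_mul C)
      ((ae_restrict_iff' measurableSet_Ioi).mpr (Eventually.of_forall hf))
  calc |l * ∫ α in Ioi (0 : ℝ), f α| = l * |∫ α in Ioi (0 : ℝ), f α| := by
        rw [abs_mul, abs_of_pos hl]
    _ ≤ l * (C * l⁻¹) := by gcongr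
    _ = C := by field_simp

lemma abs_sinh_mul_exp_neg_le {c t : ℝ} (hc : 0 ≤ c) (ht : 0 ≤ t) :
    |sinh (c * exp (-t))| ≤ sinh c := by
  have h_arg : 0 ≤ c * exp (-t) := by positivity
  rw [abs_of_nonneg (sinh_nonneg_iff.mpr h_arg), sinh_le_sinh]
  exact mul_le_of_le_one_right hc (exp_le_one_iff.mpr (neg_nonpos.mpr ht))

lemma abs_exp_mul_sin_mul_sinh_le {l α a s θ c t : ℝ} (ha : 0 ≤ a) (hs : 0 ≤ s) (hc : 0 ≤ c)
    (ht : 0 ≤ t) :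
    |exp (-(l * α) - a * s) * sin θ * sinh (c * exp (-t))| ≤ sinh c * exp (-l * α) := by
  have h_exp : exp (-(l * α) - a * s) ≤ exp (-l * α) := by
    rw [exp_le_exp, neg_mul]
    linarith [mul_nonneg ha hs]
  calc |exp (-(l * α) - a * s) * sin θ * sinh (c * exp (-t))|
      = exp (-(l * α) - a * s) * |sin θ| * |sinh (c * exp (-t))| := by
        rw [abs_mul, abs_mul, abs_of_pos (exp_pos _)]
    _ ≤ exp (-l * α) * 1 * sinh c := by
        gcongr
        exacts [abs_sin_le_one θ, abs_sinh_mul_exp_neg_le hc ht]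
    _ = sinh c * exp (-l * α) := by ring

lemma tendsto_inv_mul_one_sub_exp_neg_mul_atTop {β : ℝ} (hβ : 0 ≤ β) :
    Tendsto (fun l : ℝ => l⁻¹ * (1 - exp (-(l * β)))) atTop (𝓝 0) := by
  refine squeeze_zero' ?_ ?_ tendsto_inv_atTop_zero
  all_goals
    filter_upwards [eventually_gt_atTop 0] with l hl
    have h_exp_le : exp (-(l * β)) ≤ 1 := exp_le_one_iff.mpr (by nlinarith)
  · exact mul_nonneg (inv_nonneg.mpr hl.le) (sub_nonneg.mpr h_exp_le)
  · exact mul_le_of_le_one_right (inv_nonneg.mpr hl.le) (by linarith [exp_pos (-(l * β))])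

theorem stokesKernel_tendsto_strong_spring (u k ω σ β : ℝ)
    (hβ : 0 < β) :
    Filter.Tendsto (fun l : ℝ => stokesKernel u k ω σ l β) Filter.atTop
      (nhds ((1 / 2) * u ^ 2 * k * Real.sin (ω * β) *
        Real.exp (-(k ^ 2 * σ ^ 2 / 2) * β))) := by
  have h_local : Tendsto (fun l : ℝ => sin (ω * β) *
      exp (-(k ^ 2 * σ ^ 2 / 2) * (β + l⁻¹ * (1 - exp (-(l * β)))))) atTop
      (𝓝 (sin (ω * β) * exp (-(k ^ 2 * σ ^ 2 / 2) * β))) := by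
    simpa using (((tendsto_inv_mul_one_sub_exp_neg_mul_atTop hβ.le).const_add β).const_mul
      (-(k ^ 2 * σ ^ 2 / 2))).rexp.const_mul (sin (ω * β))
  have h_memory : Tendsto (fun l : ℝ => l * ∫ α in Ioi (0 : ℝ),
      exp (-(l * α) - k ^ 2 * σ ^ 2 / 2 * (α + β + l⁻¹)) * sin (ω * (α + β)) *
        sinh (k ^ 2 * σ ^ 2 / (2 * l) * exp (-(l * (α + β))))) atTop (𝓝 0) := by
    have h_sinh : Tendsto (fun l : ℝ => sinh (k ^ 2 * σ ^ 2 / (2 * l))) atTop (𝓝 0) := by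
      simpa [Function.comp_def] using (continuous_sinh.tendsto 0).comp
        (tendsto_const_nhds.div_atTop (tendsto_id.const_mul_atTop two_pos))
    refine squeeze_zero_norm' ?_ h_sinh
    filter_upwards [eventually_gt_atTop 0] with l hl
    refine abs_mul_integral_Ioi_le_of_abs_le_exp hl fun α (hα : 0 < α) => ?_
    exact abs_exp_mul_sin_mul_sinh_le (by positivity) (by positivity) (by positivity)
      (by positivity)
  rw [show (1 / 2) * u ^ 2 * k * sin (ω * β) * exp (-(k ^ 2 * σ ^ 2 / 2) * β) =
      (1 / 2) * u ^ 2 * k * (sin (ω * β) * exp (-(k ^ 2 * σ ^ 2 / 2) * β) - 0) by ring]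
  exact (h_local.sub h_memory).const_mul _
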